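/- arXiv:1802.09137 — 3 statements merged into one kernel-verified Lean document; each statement's English description precedes it below -/
import Mathlib

section
/- (Cauchy-criterion characterization of conformality.) Let f : ℂ → ℂ be a homeomorphism of ℂ onto ℂ with f(0) = 0, and fix a constant δ₁ with 0 < δ₁ ≤ 1. Then the following are equivalent: (a) f is conformal at 0, i.e. the limit lim_{z→0} f(z)/z exists and is nonzero; (c) for every ε > 0 there exists r > 0 such that whenever 0 < |z₁| < r and 0 < |z₂| ≤ δ₁·|z₁|, one has |log(f(z₁)/z₁) − log(f(z₂)/z₂)|_𝒞 < ε. -/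
/-!
Write `g z = f z / z`, which does not vanish off `0`. The cylinder distance between
`log (g z₁)` and `log (g z₂)` is `‖log (g z₁ / g z₂)‖`, so (c) says that `g z₁ / g z₂ → 1` as
`z₁, z₂ → 0`, once the cone condition `‖z₂‖ ≤ δ₁ ‖z₁‖` is dropped. It can be dropped because any
two points near `0` can both be compared with a third point closer to `0` than either, and the
cylinder distance satisfies the triangle inequality. Finally `g z₁ / g z₂ → 1` is the Cauchy
criterion for `g` in the multiplicative group: it keeps `‖g‖` bounded and bounded away from `0`,
so `g` is Cauchy and its limit is nonzero.
-/

open MeasureTheory Complex Filter Set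

/-- The distance to `0` on the cylinder `ℂ/2πiℤ`: `|w|_𝒞 = inf_{n ∈ ℤ} |w + 2πin|`. -/
noncomputable def cylDist (w : ℂ) : ℝ :=
  ⨅ n : ℤ, ‖w + 2 * Real.pi * Complex.I * (n : ℂ)‖

open Topology

theorem cylDist_nonneg (w : ℂ) : 0 ≤ cylDist w :=
  Real.iInf_nonneg fun _ => norm_nonneg _

theorem cylDist_le (w : ℂ) (n : ℤ) : cylDist w ≤ ‖w + 2 * Real.pi * I * n‖ :=
  ciInf_le ⟨0, by rintro _ ⟨k, rfl⟩; exact norm_nonneg _⟩ n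

theorem cylDist_neg (w : ℂ) : cylDist (-w) = cylDist w :=
  (Equiv.neg ℤ).iInf_congr fun n => by
    rw [Equiv.neg_apply, Int.cast_neg, ← norm_neg]; ring_nf

theorem cylDist_add_le (v w : ℂ) : cylDist (v + w) ≤ cylDist v + cylDist w :=
  le_ciInf_add_ciInf fun m n => (cylDist_le _ (m + n)).trans <| by
    refine (norm_add_le _ _).trans_eq' ?_; push_cast; ring_nf

theorem norm_log_le_norm_log_add_two_pi_I_mul (a : ℂ) (n : ℤ) :
    ‖log a‖ ≤ ‖log a + 2 * Real.pi * I * n‖ := by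
  have h₁ := neg_pi_lt_arg a
  have h₂ := arg_le_pi a
  have hπ := Real.pi_pos
  have hshift : 0 ≤ (n : ℝ) * (a.arg + Real.pi * n) := by
    rcases lt_trichotomy n 0 with hn | rfl | hn
    · have : (n : ℝ) ≤ -1 := by exact_mod_cast Int.le_sub_one_of_lt hn
      exact mul_nonneg_of_nonpos_of_nonpos (by linarith) (by nlinarith)
    · simp
    · have : (1 : ℝ) ≤ n := by exact_mod_cast hn
      exact mul_nonneg (by linarith) (by nlinarith)
  rw [← sq_le_sq₀ (norm_nonneg _) (norm_nonneg _), Complex.sq_norm, Complex.sq_norm]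
  simp only [normSq_apply, log_im, add_re, add_im, mul_re, mul_im, re_ofNat, im_ofNat, ofReal_re,
    ofReal_im, I_re, I_im, intCast_re, intCast_im, mul_zero, zero_mul, mul_one, sub_zero, sub_self,
    add_zero, zero_add, add_le_add_iff_left]
  nlinarith [mul_nonneg hπ.le hshift]

theorem cylDist_eq_norm_log_exp (w : ℂ) : cylDist w = ‖log (exp w)‖ := by
  obtain ⟨n, hn⟩ := exp_eq_exp_iff_exists_int.1 (exp_log (exp_ne_zero w))
  refine le_antisymm ((cylDist_le w n).trans_eq ?_) (le_ciInf fun k => ?_)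
  · rw [hn]; ring_nf
  · calc ‖log (exp w)‖ ≤ ‖log (exp w) + 2 * Real.pi * I * (k - n : ℤ)‖ :=
          norm_log_le_norm_log_add_two_pi_I_mul _ _
      _ = ‖w + 2 * Real.pi * I * k‖ := by rw [hn]; push_cast; ring_nf

theorem cylDist_log_sub_log {a b : ℂ} (ha : a ≠ 0) (hb : b ≠ 0) :
    cylDist (log a - log b) = ‖log (a / b)‖ := by
  rw [cylDist_eq_norm_log_exp, exp_sub, exp_log ha, exp_log hb]

theorem exists_norm_bounds_of_tendsto_div_prod {α 𝕜 : Type*} [NormedField 𝕜]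
    {l : Filter α} [l.NeBot] {g : α → 𝕜} (hg : ∀ᶠ x in l, g x ≠ 0)
    (h : Tendsto (fun p : α × α => g p.1 / g p.2) (l ×ˢ l) (𝓝 1)) :
    ∃ m M : ℝ, 0 < m ∧ ∀ᶠ x in l, m ≤ ‖g x‖ ∧ ‖g x‖ ≤ M := by
  have hle : ∀ᶠ p in l ×ˢ l, ‖g p.1 / g p.2‖ ≤ 2 ∧ g p.1 ≠ 0 :=
    ((continuous_norm.tendsto _).comp h |>.eventually (ge_mem_nhds (by norm_num))).and
      (tendsto_fst.eventually hg)
  obtain ⟨t, ht, hbound⟩ := eventually_prod_self_iff'.1 hle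
  obtain ⟨y, hy⟩ := l.nonempty_of_mem ht
  have hy0 : 0 < ‖g y‖ := norm_pos_iff.2 (hbound y hy y hy).2
  refine ⟨‖g y‖ / 2, 2 * ‖g y‖, half_pos hy0, Filter.mem_of_superset ht fun x hx => ?_⟩
  have hx0 : 0 < ‖g x‖ := norm_pos_iff.2 (hbound x hx x hx).2
  have hxy := (hbound x hx y hy).1
  have hyx := (hbound y hy x hx).1
  rw [norm_div, div_le_iff₀ hy0] at hxy
  rw [norm_div, div_le_iff₀ hx0] at hyx
  constructor <;> linarith

theorem exists_ne_zero_tendsto_iff_tendsto_div_prod {α 𝕜 : Type*} [NormedField 𝕜]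
    [CompleteSpace 𝕜] {l : Filter α} [l.NeBot] {g : α → 𝕜} (hg : ∀ᶠ x in l, g x ≠ 0) :
    (∃ c, c ≠ 0 ∧ Tendsto g l (𝓝 c)) ↔
      Tendsto (fun p : α × α => g p.1 / g p.2) (l ×ˢ l) (𝓝 1) := by
  refine ⟨fun ⟨c, hc0, hc⟩ => ?_, fun h => ?_⟩
  · exact div_self hc0 ▸ (hc.comp tendsto_fst).div (hc.comp tendsto_snd) hc0
  obtain ⟨m, M, hm, hmM⟩ := exists_norm_bounds_of_tendsto_div_prod hg h
  have hsub : Tendsto (fun p : α × α => g p.1 - g p.2) (l ×ˢ l) (𝓝 0) := by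
    have hprod : Tendsto (fun p : α × α => (g p.1 / g p.2 - 1) * g p.2) (l ×ˢ l) (𝓝 0) :=
      (tendsto_sub_nhds_zero_iff.2 h).zero_mul_isBoundedUnder_le <|
        tendsto_snd.isBoundedUnder_comp (isBoundedUnder_of_eventually_le (hmM.mono fun _ h => h.2))
    refine hprod.congr' ((tendsto_snd.eventually hg).mono fun p hp => ?_)
    rw [sub_mul, div_mul_cancel₀ _ hp, one_mul]
  obtain ⟨c, hc⟩ := cauchy_map_iff_exists_tendsto.1
    ((IsUniformAddGroup.cauchy_map_iff_tendsto l g).2 ⟨‹_›, hsub⟩)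
  have hmc : m ≤ ‖c‖ := ge_of_tendsto hc.norm (hmM.mono fun _ h => h.1)
  exact ⟨c, norm_pos_iff.1 (hm.trans_le hmc), hc⟩

theorem tendsto_log_nhds_zero_iff {β : Type*} {l : Filter β} {u : β → ℂ}
    (hu : ∀ᶠ x in l, u x ≠ 0) :
    Tendsto (fun x => log (u x)) l (𝓝 0) ↔ Tendsto u l (𝓝 1) := by
  refine ⟨fun h => ?_, fun h => ?_⟩
  · have := (continuous_exp.tendsto 0).comp h
    rw [exp_zero] at this
    exact this.congr' (hu.mono fun x hx => exp_log hx)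
  · simpa [Function.comp_def] using (continuousAt_clog one_mem_slitPlane).tendsto.comp h

theorem mem_nhdsNE_zero_iff {s : Set ℂ} :
    s ∈ 𝓝[≠] (0 : ℂ) ↔ ∃ r > 0, ∀ z : ℂ, 0 < ‖z‖ → ‖z‖ < r → z ∈ s := by
  simp only [Metric.mem_nhdsWithin_iff, subset_def, mem_inter_iff, Metric.mem_ball,
    dist_zero_right, mem_compl_singleton_iff, ← norm_pos_iff]
  exact exists_congr fun r => and_congr_right fun _ => forall_congr' fun z => by tauto

theorem tendsto_cylDist_sub_prod_nhdsNE_iff (φ : ℂ → ℂ) {δ : ℝ} (hδ0 : 0 < δ) (hδ1 : δ ≤ 1) :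
    Tendsto (fun p : ℂ × ℂ => cylDist (φ p.1 - φ p.2)) (𝓝[≠] 0 ×ˢ 𝓝[≠] 0) (𝓝 0) ↔
      ∀ ε > 0, ∃ r > 0, ∀ z₁ z₂ : ℂ, 0 < ‖z₁‖ → ‖z₁‖ < r → 0 < ‖z₂‖ → ‖z₂‖ ≤ δ * ‖z₁‖ →
        cylDist (φ z₁ - φ z₂) < ε := by
  simp only [Metric.tendsto_nhds, Real.dist_eq, sub_zero, abs_of_nonneg (cylDist_nonneg _)]
  refine ⟨fun h ε hε => ?_, fun h ε hε => ?_⟩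
  · obtain ⟨t, ht, hd⟩ := eventually_prod_self_iff'.1 (h ε hε)
    obtain ⟨r, hr, hrt⟩ := mem_nhdsNE_zero_iff.1 ht
    refine ⟨r, hr, fun z₁ z₂ h₁ h₁r h₂ h₂le => hd _ (hrt _ h₁ h₁r) _ (hrt _ h₂ ?_)⟩
    exact h₂le.trans_lt ((mul_le_of_le_one_left (norm_nonneg _) hδ1).trans_lt h₁r)
  obtain ⟨r, hr, hcone⟩ := h (ε / 2) (half_pos hε)
  refine eventually_prod_self_iff'.2 ⟨{z | 0 < ‖z‖ ∧ ‖z‖ < r},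
    mem_nhdsNE_zero_iff.2 ⟨r, hr, fun z h₁ h₂ => ⟨h₁, h₂⟩⟩, fun z₁ ⟨h₁, h₁r⟩ z₂ ⟨h₂, h₂r⟩ => ?_⟩
  set w : ℂ := ((δ * min ‖z₁‖ ‖z₂‖ : ℝ) : ℂ)
  have hw : ‖w‖ = δ * min ‖z₁‖ ‖z₂‖ := by
    rw [norm_real, Real.norm_of_nonneg (by positivity)]
  have hw0 : 0 < ‖w‖ := hw ▸ mul_pos hδ0 (lt_min h₁ h₂)
  calc cylDist (φ z₁ - φ z₂) = cylDist ((φ z₁ - φ w) + -(φ z₂ - φ w)) := by ring_nf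
    _ ≤ cylDist (φ z₁ - φ w) + cylDist (φ z₂ - φ w) := by
      rw [← cylDist_neg (φ z₂ - φ w)]; exact cylDist_add_le _ _
    _ < ε / 2 + ε / 2 := add_lt_add
      (hcone z₁ w h₁ h₁r hw0 (hw ▸ mul_le_mul_of_nonneg_left (min_le_left _ _) hδ0.le))
      (hcone z₂ w h₂ h₂r hw0 (hw ▸ mul_le_mul_of_nonneg_left (min_le_right _ _) hδ0.le))
    _ = ε := add_halves ε

/-- **Cauchy-criterion characterization of conformality.** For a homeomorphism `f` of `ℂ`
with `f 0 = 0` and a fixed `0 < δ₁ ≤ 1`, `f` is conformal at `0` (i.e. `lim_{z→0} f z/z`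
exists and is nonzero) iff for every `ε > 0` there is `r > 0` such that `0 < |z₁| < r`
and `0 < |z₂| ≤ δ₁|z₁|` imply `|log(f z₁/z₁) - log(f z₂/z₂)|_𝒞 < ε`. -/
theorem conformality_iff_cauchy_criterion (f : ℂ ≃ₜ ℂ) (hf0 : f 0 = 0)
    (δ₁ : ℝ) (hδ₁0 : 0 < δ₁) (hδ₁1 : δ₁ ≤ 1) :
    (∃ c : ℂ, c ≠ 0 ∧ Tendsto (fun z : ℂ => f z / z) (nhdsWithin 0 {0}ᶜ) (nhds c)) ↔
    (∀ ε > 0, ∃ r > 0, ∀ z₁ z₂ : ℂ,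
        0 < ‖z₁‖ → ‖z₁‖ < r →
        0 < ‖z₂‖ → ‖z₂‖ ≤ δ₁ * ‖z₁‖ →
        cylDist (Complex.log (f z₁ / z₁) - Complex.log (f z₂ / z₂)) < ε) := by
  set g : ℂ → ℂ := fun z => f z / z
  have hg : ∀ᶠ z in 𝓝[≠] (0 : ℂ), g z ≠ 0 := eventually_nhdsWithin_of_forall fun z hz =>
    div_ne_zero (fun h => hz (f.injective (h.trans hf0.symm))) hz
  have hg₂ := hg.prod_mk hg
  rw [exists_ne_zero_tendsto_iff_tendsto_div_prod hg,
    ← tendsto_log_nhds_zero_iff (hg₂.mono fun p hp => div_ne_zero hp.1 hp.2),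
    tendsto_zero_iff_norm_tendsto_zero,
    ← tendsto_cylDist_sub_prod_nhdsNE_iff (fun z => log (g z)) hδ₁0 hδ₁1]
  exact tendsto_congr' (hg₂.mono fun p hp => (cylDist_log_sub_log hp.1 hp.2).symm)
end

section
/- (Lower bound for J_*.) Let z₁, z₂ ∈ ℂ with 0 < |z₂| < |z₁|. Then J_*(z₁, z₂) = ∬_ℂ |φ_{z₁,z₂}(z)| dx dy ≥ 2π·(1/|1 − z₂/z₁|)·log(|z₁|/|z₂|). -/
open MeasureTheory Complex Filter Set

/-- The quadratic differential `φ_{z₁,z₂}(z) = z₁/(z(z-z₁)(z-z₂))`. -/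
noncomputable def phiQD (z₁ z₂ z : ℂ) : ℂ := z₁ / (z * (z - z₁) * (z - z₂))

/-!
In polar coordinates `z = r e^{iθ}` one has `r |φ(z)| = |z₁| / |(z - z₁)(z - z₂)|`. For
`|z₂| < r < |z₁|` the Cauchy integral formula gives
`∮_{|z| = r} dz / ((z - z₁)(z - z₂)) = 2πi / (z₂ - z₁)`, so the angular integral of `r |φ|` is at
least `2π |z₁| / (r |z₁ - z₂|)`, and integrating over `r ∈ (|z₂|, |z₁|)` produces the logarithm.
The Bochner integral is the Lebesgue one because `φ` is integrable: its poles are simple (partial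
fractions) and it decays like `|z|⁻³`.
-/

open Real Metric Asymptotics
open scoped ENNReal

lemma phiQD_eq_mul_inv (z₁ z₂ z : ℂ) :
    phiQD z₁ z₂ z = z₁ * z⁻¹ * ((z - z₁) * (z - z₂))⁻¹ := by
  rw [phiQD, div_eq_mul_inv, mul_assoc z, mul_inv, mul_assoc]

lemma phiQD_eq_partial_fractions {z₁ z₂ z : ℂ} (h₂ : z₂ ≠ 0) (h₁₂ : z₁ ≠ z₂) (hz : z ≠ 0)
    (hz₁ : z ≠ z₁) (hz₂ : z ≠ z₂) :
    phiQD z₁ z₂ z = z₂⁻¹ * z⁻¹ + (z₁ - z₂)⁻¹ * (z - z₁)⁻¹ +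
      z₁ * (z₂ * (z₂ - z₁))⁻¹ * (z - z₂)⁻¹ := by
  have := sub_ne_zero.2 h₁₂
  have := sub_ne_zero.2 h₁₂.symm
  have := sub_ne_zero.2 hz₁
  have := sub_ne_zero.2 hz₂
  simp only [phiQD]
  field_simp
  ring

lemma locallyIntegrable_inv : LocallyIntegrable (fun z : ℂ => z⁻¹) :=
  locallyIntegrable_of_norm_le_rpow (α := 1) (C := 1) (by simp) (by simp)
    (ae_of_all _ fun z => by simp [Real.rpow_neg_one]) measurable_inv.aestronglyMeasurable

lemma locallyIntegrable_inv_sub (a : ℂ) : LocallyIntegrable (fun z : ℂ => (z - a)⁻¹) := by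
  have h0 := locallyIntegrable_inv
  rw [← map_add_right_eq_self volume (-a)] at h0
  exact (locallyIntegrable_map_homeomorph (Homeomorph.subRight a)).1 h0

lemma isBigO_cocompact_inv_sub (a : ℂ) :
    (fun z : ℂ => (z - a)⁻¹) =O[cocompact ℂ] fun z => (1 + ‖z‖)⁻¹ := by
  refine IsBigO.of_bound 2 ?_
  filter_upwards [tendsto_norm_cocompact_atTop.eventually_ge_atTop (2 * ‖a‖ + 1)] with z hz
  have hza : (1 + ‖z‖) / 2 ≤ ‖z - a‖ := by linarith [norm_sub_norm_le z a]
  rw [norm_inv, norm_inv, Real.norm_of_nonneg (by positivity), ← div_eq_mul_inv,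
    ← inv_div]
  exact inv_anti₀ (by positivity) hza

lemma measurable_phiQD (z₁ z₂ : ℂ) : Measurable (phiQD z₁ z₂) := by
  unfold phiQD; fun_prop

lemma locallyIntegrable_phiQD {z₁ z₂ : ℂ} (h₂ : z₂ ≠ 0) (h₁₂ : z₁ ≠ z₂) :
    LocallyIntegrable (phiQD z₁ z₂) := by
  have hsum := ((locallyIntegrable_inv.smul z₂⁻¹).add
    ((locallyIntegrable_inv_sub z₁).smul (z₁ - z₂)⁻¹)).add
    ((locallyIntegrable_inv_sub z₂).smul (z₁ * (z₂ * (z₂ - z₁))⁻¹))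
  have hpoles : ∀ᵐ z : ℂ, z ∉ ({0, z₁, z₂} : Set ℂ) :=
    measure_eq_zero_iff_ae_notMem.1 ((toFinite _).measure_zero volume)
  refine hsum.mono (measurable_phiQD z₁ z₂).aestronglyMeasurable ?_
  filter_upwards [hpoles] with z hz
  simp only [mem_insert_iff, mem_singleton_iff, not_or] at hz
  rw [phiQD_eq_partial_fractions h₂ h₁₂ hz.1 hz.2.1 hz.2.2]
  rfl

lemma integrable_phiQD {z₁ z₂ : ℂ} (h₂ : z₂ ≠ 0) (h₁₂ : z₁ ≠ z₂) :
    Integrable (phiQD z₁ z₂) := by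
  refine (locallyIntegrable_phiQD h₂ h₁₂).integrable_of_isBigO_cocompact
    (g := fun z : ℂ => (1 + ‖z‖) ^ (-3 : ℝ)) ?_
    ((integrable_one_add_norm (by norm_num)).integrableAtFilter _)
  have h := (((isBigO_cocompact_inv_sub 0).mul (isBigO_cocompact_inv_sub z₁)).mul
    (isBigO_cocompact_inv_sub z₂)).const_mul_left z₁
  refine h.congr (fun z => ?_) (fun z => ?_)
  · rw [phiQD_eq_mul_inv, sub_zero, mul_inv]
    ring
  · rw [Real.rpow_neg (by positivity), show (3 : ℝ) = (3 : ℕ) by norm_num,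
      Real.rpow_natCast, ← inv_pow]
    ring

lemma circleIntegral_inv_sub_mul_inv_sub {c a w : ℂ} {R : ℝ} (hw : w ∈ ball c R)
    (ha : a ∉ closedBall c R) :
    (∮ z in C(c, R), ((z - a) * (z - w))⁻¹) = 2 * π * I * (w - a)⁻¹ := by
  have hd : DifferentiableOn ℂ (fun z => (z - a)⁻¹) (closedBall c R) := fun z hz =>
    ((differentiableAt_id.sub_const a).inv
      (sub_ne_zero.2 fun h => ha (h ▸ hz))).differentiableWithinAt
  simpa only [smul_eq_mul, mul_inv, mul_comm (_ - a)⁻¹] using hd.circleIntegral_sub_inv_smul hw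

lemma two_pi_div_norm_sub_le_integral {c a w : ℂ} {R : ℝ} (hw : w ∈ ball c R)
    (ha : a ∉ closedBall c R) :
    2 * π / ‖a - w‖ ≤
      ∫ θ in Ioo (-π) π, R * ‖((circleMap c R θ - a) * (circleMap c R θ - w))⁻¹‖ := by
  have hR : 0 < R := pos_of_mem_ball hw
  set f : ℝ → ℝ := fun θ => R * ‖((circleMap c R θ - a) * (circleMap c R θ - w))⁻¹‖
  have hper : Function.Periodic f (2 * π) := fun θ => by simp only [f, periodic_circleMap c R θ]
  calc 2 * π / ‖a - w‖ = ‖∮ z in C(c, R), ((z - a) * (z - w))⁻¹‖ := by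
        rw [circleIntegral_inv_sub_mul_inv_sub hw ha, norm_mul, norm_inv, norm_sub_rev]
        simp [abs_of_pos pi_pos, div_eq_mul_inv]
    _ ≤ ∫ θ in (0 : ℝ)..0 + 2 * π, f θ := by
        rw [zero_add, circleIntegral]
        refine (intervalIntegral.norm_integral_le_integral_norm two_pi_pos.le).trans_eq ?_
        simp only [f, deriv_circleMap, norm_smul, norm_mul, norm_circleMap_zero, norm_I,
          mul_one, abs_of_pos hR]
    _ = ∫ θ in (-π)..π, f θ := by
        rw [hper.intervalIntegral_add_eq 0 (-π), neg_add_eq_sub, two_mul, add_sub_cancel_right]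
    _ = ∫ θ in Ioo (-π) π, f θ := by
        rw [intervalIntegral.integral_of_le (by linarith [pi_pos]), integral_Ioc_eq_integral_Ioo]

lemma polarCoord_symm_eq_circleMap (r θ : ℝ) :
    Complex.polarCoord.symm (r, θ) = circleMap 0 r θ := by
  rw [Complex.polarCoord_symm_apply, circleMap_zero, exp_mul_I, ← ofReal_cos, ← ofReal_sin]

lemma ofReal_integral_le_lintegral_ofReal {α : Type*} [MeasurableSpace α] {μ : Measure α}
    {f : α → ℝ} (hf : 0 ≤ᵐ[μ] f) (hfm : AEStronglyMeasurable f μ) :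
    ENNReal.ofReal (∫ x, f x ∂μ) ≤ ∫⁻ x, ENNReal.ofReal (f x) ∂μ := by
  rw [integral_eq_lintegral_of_nonneg_ae hf hfm]
  exact ENNReal.ofReal_toReal_le

lemma ofReal_div_le_lintegral_enorm_phiQD_circle {z₁ z₂ : ℂ} {r : ℝ} (hr : r ∈ Ioo ‖z₂‖ ‖z₁‖) :
    ENNReal.ofReal (2 * π * (‖z₁‖ / ‖z₁ - z₂‖) / r) ≤
      ∫⁻ θ in Ioo (-π) π, ENNReal.ofReal r • ‖phiQD z₁ z₂ (Complex.polarCoord.symm (r, θ))‖ₑ := by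
  have hr0 : 0 < r := (norm_nonneg _).trans_lt hr.1
  set g : ℝ → ℝ := fun θ => r * ‖((circleMap 0 r θ - z₁) * (circleMap 0 r θ - z₂))⁻¹‖
  have hg : 2 * π / ‖z₁ - z₂‖ ≤ ∫ θ in Ioo (-π) π, g θ :=
    two_pi_div_norm_sub_le_integral (by simpa using hr.1) (by simpa using hr.2)
  have hpolar : ∀ θ, ENNReal.ofReal r • ‖phiQD z₁ z₂ (Complex.polarCoord.symm (r, θ))‖ₑ =
      ENNReal.ofReal (‖z₁‖ / r * g θ) := fun θ => by
    rw [smul_eq_mul, ← ofReal_norm, ← ENNReal.ofReal_mul hr0.le,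
      polarCoord_symm_eq_circleMap, phiQD_eq_mul_inv, norm_mul, norm_mul, norm_inv,
      norm_circleMap_zero, abs_of_pos hr0]
    congr 1
    simp only [g, norm_inv]
    field_simp
  simp_rw [hpolar]
  calc ENNReal.ofReal (2 * π * (‖z₁‖ / ‖z₁ - z₂‖) / r)
      ≤ ENNReal.ofReal (∫ θ in Ioo (-π) π, ‖z₁‖ / r * g θ) := by
        rw [integral_const_mul]
        refine ENNReal.ofReal_le_ofReal ?_
        calc 2 * π * (‖z₁‖ / ‖z₁ - z₂‖) / r = ‖z₁‖ / r * (2 * π / ‖z₁ - z₂‖) := by ring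
          _ ≤ _ := by gcongr
    _ ≤ _ := ofReal_integral_le_lintegral_ofReal (ae_of_all _ fun θ => by positivity)
        (by fun_prop)

lemma lintegral_ofReal_div_Ioo {a b C : ℝ} (ha : 0 < a) (hab : a ≤ b) (hC : 0 ≤ C) :
    ∫⁻ r in Ioo a b, ENNReal.ofReal (C / r) = ENNReal.ofReal (C * Real.log (b / a)) := by
  have hpos : ∀ r ∈ Icc a b, 0 < r := fun r hr => ha.trans_le hr.1
  have hint : IntegrableOn (fun r => C / r) (Ioo a b) :=
    ((continuousOn_const.div continuousOn_id fun r hr => (hpos r hr).ne').integrableOn_compact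
      isCompact_Icc).mono_set Ioo_subset_Icc_self
  rw [← ofReal_integral_eq_lintegral_ofReal hint
    ((ae_restrict_iff' measurableSet_Ioo).2 (ae_of_all _ fun r hr =>
      div_nonneg hC (hpos r (Ioo_subset_Icc_self hr)).le)),
    ← integral_Ioc_eq_integral_Ioo, ← intervalIntegral.integral_of_le hab]
  simp_rw [div_eq_mul_inv C]
  rw [intervalIntegral.integral_const_mul, integral_inv_of_pos ha (ha.trans_le hab)]

lemma ofReal_le_lintegral_enorm_phiQD {z₁ z₂ : ℂ} (h₂ : 0 < ‖z₂‖) (h₁₂ : ‖z₂‖ < ‖z₁‖) :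
    ENNReal.ofReal (2 * π * (‖z₁‖ / ‖z₁ - z₂‖) * Real.log (‖z₁‖ / ‖z₂‖)) ≤
      ∫⁻ z, ‖phiQD z₁ z₂ z‖ₑ := by
  have hbox : Ioo ‖z₂‖ ‖z₁‖ ×ˢ Ioo (-π) π ⊆ polarCoord.target := by
    rw [polarCoord_target]
    exact prod_mono (fun r hr => h₂.trans hr.1) subset_rfl
  calc _ = ∫⁻ r in Ioo ‖z₂‖ ‖z₁‖, ENNReal.ofReal (2 * π * (‖z₁‖ / ‖z₁ - z₂‖) / r) :=
        (lintegral_ofReal_div_Ioo h₂ h₁₂.le (by positivity)).symm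
    _ ≤ ∫⁻ r in Ioo ‖z₂‖ ‖z₁‖, ∫⁻ θ in Ioo (-π) π,
          ENNReal.ofReal r • ‖phiQD z₁ z₂ (Complex.polarCoord.symm (r, θ))‖ₑ :=
        setLIntegral_mono' measurableSet_Ioo fun r hr =>
          ofReal_div_le_lintegral_enorm_phiQD_circle hr
    _ = ∫⁻ p in Ioo ‖z₂‖ ‖z₁‖ ×ˢ Ioo (-π) π,
          ENNReal.ofReal p.1 • ‖phiQD z₁ z₂ (Complex.polarCoord.symm p)‖ₑ := by
        have hsymm : Continuous fun p : ℝ × ℝ => Complex.polarCoord.symm p := by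
          simp only [Complex.polarCoord_symm_apply]
          fun_prop
        rw [Measure.volume_eq_prod, setLIntegral_prod]
        exact (measurable_fst.ennreal_ofReal.smul
          ((measurable_phiQD z₁ z₂).enorm.comp hsymm.measurable)).aemeasurable
    _ ≤ ∫⁻ p in polarCoord.target,
          ENNReal.ofReal p.1 • ‖phiQD z₁ z₂ (Complex.polarCoord.symm p)‖ₑ :=
        lintegral_mono_set hbox
    _ = ∫⁻ z, ‖phiQD z₁ z₂ z‖ₑ :=
        Complex.lintegral_comp_polarCoord_symm fun z => ‖phiQD z₁ z₂ z‖ₑ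

/-- **Lower bound for `J_*`.** For `0 < |z₂| < |z₁|`,
`J_*(z₁,z₂) = ∬_ℂ |φ_{z₁,z₂}| dxdy ≥ 2π·(1/|1 - z₂/z₁|)·log(|z₁|/|z₂|)`. -/
theorem Jstar_lower_bound (z₁ z₂ : ℂ) (h₂ : 0 < ‖z₂‖)
    (h₁₂ : ‖z₂‖ < ‖z₁‖) :
    2 * Real.pi * (1 / ‖1 - z₂ / z₁‖) *
        Real.log (‖z₁‖ / ‖z₂‖) ≤
      ∫ z : ℂ, ‖phiQD z₁ z₂ z‖ := by
  have hz₁ : z₁ ≠ 0 := norm_pos_iff.1 (h₂.trans h₁₂)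
  have hint : Integrable (phiQD z₁ z₂) :=
    integrable_phiQD (norm_pos_iff.1 h₂) fun h => h₁₂.ne (h ▸ rfl)
  have hcoef : 1 / ‖1 - z₂ / z₁‖ = ‖z₁‖ / ‖z₁ - z₂‖ := by
    rw [one_sub_div hz₁, norm_div, one_div_div]
  rw [hcoef, ← ENNReal.ofReal_le_ofReal_iff (integral_nonneg fun _ => norm_nonneg _),
    ofReal_integral_norm_eq_lintegral_enorm hint]
  exact ofReal_le_lintegral_enorm_phiQD h₂ h₁₂
end

section
/- (Estimate on I_{p,s}.) Let k ∈ [0,1), K = (1+k)/(1−k), and let μ : ℂ → ℂ be measurable with |μ(z)| ≤ k for all z, satisfying ∬_{|z|<1} |μ(z)|²/((1−|μ(z)|²)·|z|²) dx dy < ∞. Let p > 2 and 0 < s < p. Then there exist constants C₂ > 0 and C₃ > 0 depending only on K and p such that for all 0 < r < r': I_{p,s}(μ; r) ≤ C₂·∬_{|z|<r'} |μ(z)|²/((1−|μ(z)|²)·|z|²) dx dy + (C₃/s)·(r/r')^s. In particular I_{p,s}(μ; r) < ∞ for every r > 0. -/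
/-!
Write `N(t) = t ^ p / (1 - t ^ 2) ^ p`. For `0 ≤ t ≤ k < 1` and `p ≥ 2` one has
`N(t) ≤ a · t ^ 2 / (1 - t ^ 2)` with `a = k ^ (p - 2) / (1 - k ^ 2) ^ (p - 1)`, and `N(t) ≤ N(k)`.
Split the plane at `|z| = r'`. On the disc, drop the factor `(1 + |z| / r) ^ s ≥ 1` and compare
with the integrand `|μ|² / ((1 - |μ|²) |z|²)`. Outside it, use `(1 + |z| / r) ^ s ≥ (|z| / r) ^ s`
and the radial integral `∫_{|z| ≥ r'} |z| ^ (-2 - s) = 2π r' ^ (-s) / s`.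
-/

open MeasureTheory Complex Filter Set

noncomputable def Ips (μ : ℂ → ℂ) (p s r : ℝ) : ℝ :=
  ∫ z : ℂ, ‖μ z‖ ^ p / (1 - ‖μ z‖ ^ 2) ^ p /
    (‖z‖ ^ 2 * (1 + ‖z‖ / r) ^ s)

open Module

lemma compl_setOf_norm_lt {E : Type*} [Norm E] (R : ℝ) : {z : E | ‖z‖ < R}ᶜ = {z | R ≤ ‖z‖} := by
  ext
  simp

lemma indicator_setOf_le_norm {E : Type*} [Norm E] (c : ℝ) (f : ℝ → ℝ) :
    {x : E | c ≤ ‖x‖}.indicator (fun x => f ‖x‖) = fun x => (Ici c).indicator f ‖x‖ :=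
  rfl

section NormSets

variable {E : Type*} [NormedAddCommGroup E] [MeasurableSpace E] [OpensMeasurableSpace E]

lemma measurableSet_setOf_norm_lt (R : ℝ) : MeasurableSet {x : E | ‖x‖ < R} :=
  measurableSet_lt measurable_norm measurable_const

lemma measurableSet_setOf_le_norm (R : ℝ) : MeasurableSet {x : E | R ≤ ‖x‖} :=
  measurableSet_le measurable_const measurable_norm

end NormSets

section RadialTail

variable {E : Type*} [NormedAddCommGroup E] [NormedSpace ℝ E] [FiniteDimensional ℝ E] [Nontrivial E]

lemma pow_finrank_sub_one_mul_indicator_rpow {b c : ℝ} (hc : 0 < c) :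
    (fun y : ℝ => y ^ (finrank ℝ E - 1) • (Ici c).indicator (· ^ b) y) =
      (Ici c).indicator (· ^ (b + finrank ℝ E - 1)) := by
  ext y
  by_cases hcy : c ≤ y
  · have hy : 0 < y := hc.trans_le hcy
    have hn : ((finrank ℝ E - 1 : ℕ) : ℝ) = finrank ℝ E - 1 := by
      rw [Nat.cast_sub finrank_pos, Nat.cast_one]
    simp only [smul_eq_mul, indicator_of_mem (mem_Ici.2 hcy)]
    rw [← Real.rpow_natCast, hn, ← Real.rpow_add hy]
    ring_nf
  · simp [hcy]

variable [MeasurableSpace E] [BorelSpace E] (ν : Measure E) [ν.IsAddHaarMeasure]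

lemma integrableOn_norm_rpow_setOf_le_norm {b c : ℝ} (hb : b < -finrank ℝ E) (hc : 0 < c) :
    IntegrableOn (fun x => ‖x‖ ^ b) {x | c ≤ ‖x‖} ν := by
  rw [← integrable_indicator_iff (measurableSet_setOf_le_norm c),
    indicator_setOf_le_norm c (· ^ b),
    integrable_fun_norm_addHaar, pow_finrank_sub_one_mul_indicator_rpow hc, IntegrableOn,
    integrable_indicator_iff measurableSet_Ici, IntegrableOn,
    Measure.restrict_restrict measurableSet_Ici, inter_eq_left.2 (Ici_subset_Ioi.2 hc),
    ← IntegrableOn, integrableOn_Ici_iff_integrableOn_Ioi]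
  exact integrableOn_Ioi_rpow_of_lt (by linarith) hc

lemma setIntegral_norm_rpow_setOf_le_norm {b c : ℝ} (hb : b < -finrank ℝ E) (hc : 0 < c) :
    ∫ x in {x | c ≤ ‖x‖}, ‖x‖ ^ b ∂ν =
      finrank ℝ E * ν.real (Metric.ball 0 1) * (-c ^ (b + finrank ℝ E) / (b + finrank ℝ E)) := by
  rw [← integral_indicator (measurableSet_setOf_le_norm c),
    indicator_setOf_le_norm c (· ^ b),
    integral_fun_norm_addHaar, pow_finrank_sub_one_mul_indicator_rpow hc,
    setIntegral_indicator measurableSet_Ici, inter_eq_right.2 (Ici_subset_Ioi.2 hc),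
    integral_Ici_eq_integral_Ioi, integral_Ioi_rpow_of_lt (by linarith) hc]
  simp only [nsmul_eq_mul, smul_eq_mul, sub_add_cancel]
  ring

end RadialTail

lemma integrableOn_norm_rpow_setOf_le_norm_complex {b c : ℝ} (hb : b < -2) (hc : 0 < c) :
    IntegrableOn (fun z : ℂ => ‖z‖ ^ b) {z | c ≤ ‖z‖} :=
  integrableOn_norm_rpow_setOf_le_norm volume (by simpa using hb) hc

lemma setIntegral_norm_rpow_setOf_le_norm_complex {b c : ℝ} (hb : b < -2) (hc : 0 < c) :
    ∫ z : ℂ in {z | c ≤ ‖z‖}, ‖z‖ ^ b = 2 * Real.pi * (-c ^ (b + 2) / (b + 2)) := by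
  rw [setIntegral_norm_rpow_setOf_le_norm volume (by simpa using hb) hc]
  simp [Measure.real, Complex.volume_ball]

lemma rpow_div_one_sub_sq_rpow_le {k p t : ℝ} (hk : k < 1) (hp : 0 ≤ p) (ht : 0 ≤ t)
    (htk : t ≤ k) : t ^ p / (1 - t ^ 2) ^ p ≤ k ^ p / (1 - k ^ 2) ^ p := by
  have hk2 : 0 < 1 - k ^ 2 := by nlinarith
  gcongr
  exact Real.rpow_nonneg (ht.trans htk) p

lemma rpow_div_one_sub_sq_rpow_le_mul {k p t : ℝ} (hk : k < 1) (hp : 2 ≤ p) (ht : 0 ≤ t)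
    (htk : t ≤ k) :
    t ^ p / (1 - t ^ 2) ^ p ≤ k ^ (p - 2) / (1 - k ^ 2) ^ (p - 1) * (t ^ 2 / (1 - t ^ 2)) := by
  have hk2 : 0 < 1 - k ^ 2 := by nlinarith
  have hkt : 1 - k ^ 2 ≤ 1 - t ^ 2 := by nlinarith
  have ht2 : 0 < 1 - t ^ 2 := hk2.trans_le hkt
  have hnum : t ^ p = t ^ (p - 2) * t ^ 2 := by
    rw [← Real.rpow_natCast t 2, ← Real.rpow_add_of_nonneg ht (by linarith) (by norm_num)]
    norm_num
  have hden : (1 - t ^ 2) ^ p = (1 - t ^ 2) ^ (p - 1) * (1 - t ^ 2) := by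
    rw [← Real.rpow_add_one ht2.ne', sub_add_cancel]
  rw [hnum, hden, ← div_mul_div_comm]
  gcongr
  · exact Real.rpow_nonneg (ht.trans htk) _
  all_goals linarith

lemma div_sq_mul_one_add_div_rpow_le {A ρ r s : ℝ} (hA : 0 ≤ A) (hρ : 0 ≤ ρ) (hr : 0 < r)
    (hs : 0 ≤ s) : A / (ρ ^ 2 * (1 + ρ / r) ^ s) ≤ A / ρ ^ 2 := by
  rw [← div_div]
  exact div_le_self (by positivity) (Real.one_le_rpow (by linarith [div_nonneg hρ hr.le]) hs)

lemma div_sq_mul_one_add_div_rpow_le_rpow {A ρ r s : ℝ} (hA : 0 ≤ A) (hρ : 0 < ρ) (hr : 0 < r)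
    (hs : 0 ≤ s) : A / (ρ ^ 2 * (1 + ρ / r) ^ s) ≤ A * r ^ s * ρ ^ (-(2 + s)) := by
  have hlow : ρ ^ (2 + s) / r ^ s ≤ ρ ^ 2 * (1 + ρ / r) ^ s := by
    rw [Real.rpow_add hρ, Real.rpow_two, mul_div_assoc, ← Real.div_rpow hρ.le hr.le]
    gcongr
    linarith
  calc A / (ρ ^ 2 * (1 + ρ / r) ^ s) ≤ A / (ρ ^ (2 + s) / r ^ s) := by gcongr
    _ = A * r ^ s * ρ ^ (-(2 + s)) := by
      rw [Real.rpow_neg hρ.le]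
      field_simp

noncomputable def ipsIntegrand (μ : ℂ → ℂ) (p s r : ℝ) (z : ℂ) : ℝ :=
  ‖μ z‖ ^ p / (1 - ‖μ z‖ ^ 2) ^ p / (‖z‖ ^ 2 * (1 + ‖z‖ / r) ^ s)

noncomputable def dilatationIntegrand (μ : ℂ → ℂ) (z : ℂ) : ℝ :=
  ‖μ z‖ ^ 2 / ((1 - ‖μ z‖ ^ 2) * ‖z‖ ^ 2)

section Integrands

variable {μ : ℂ → ℂ} {k p s r : ℝ}

lemma one_sub_norm_sq_pos (hk : k < 1) (hμk : ∀ z, ‖μ z‖ ≤ k) (z : ℂ) : 0 < 1 - ‖μ z‖ ^ 2 := by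
  nlinarith [norm_nonneg (μ z), hμk z]

lemma measurable_ipsIntegrand (hμ : Measurable μ) : Measurable (ipsIntegrand μ p s r) := by
  unfold ipsIntegrand
  fun_prop

lemma measurable_dilatationIntegrand (hμ : Measurable μ) : Measurable (dilatationIntegrand μ) := by
  unfold dilatationIntegrand
  fun_prop

lemma ipsIntegrand_nonneg (hk : k < 1) (hμk : ∀ z, ‖μ z‖ ≤ k) (hr : 0 ≤ r) (z : ℂ) :
    0 ≤ ipsIntegrand μ p s r z := by
  have := one_sub_norm_sq_pos hk hμk z
  unfold ipsIntegrand
  positivity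

lemma dilatationIntegrand_nonneg (hk : k < 1) (hμk : ∀ z, ‖μ z‖ ≤ k) (z : ℂ) :
    0 ≤ dilatationIntegrand μ z := by
  have := one_sub_norm_sq_pos hk hμk z
  unfold dilatationIntegrand
  positivity

lemma ipsIntegrand_le_mul_dilatationIntegrand (hk : k < 1) (hp : 2 ≤ p) (hμk : ∀ z, ‖μ z‖ ≤ k)
    (hr : 0 < r) (hs : 0 ≤ s) (z : ℂ) :
    ipsIntegrand μ p s r z ≤
      k ^ (p - 2) / (1 - k ^ 2) ^ (p - 1) * dilatationIntegrand μ z := by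
  have := one_sub_norm_sq_pos hk hμk z
  calc ipsIntegrand μ p s r z ≤ ‖μ z‖ ^ p / (1 - ‖μ z‖ ^ 2) ^ p / ‖z‖ ^ 2 :=
        div_sq_mul_one_add_div_rpow_le (by positivity) (norm_nonneg z) hr hs
    _ ≤ k ^ (p - 2) / (1 - k ^ 2) ^ (p - 1) * (‖μ z‖ ^ 2 / (1 - ‖μ z‖ ^ 2)) / ‖z‖ ^ 2 := by
        gcongr
        exact rpow_div_one_sub_sq_rpow_le_mul hk hp (norm_nonneg _) (hμk z)
    _ = _ := by rw [dilatationIntegrand, mul_div_assoc, div_div]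

lemma ipsIntegrand_le_mul_norm_rpow (hk : k < 1) (hp : 0 ≤ p) (hμk : ∀ z, ‖μ z‖ ≤ k)
    (hr : 0 < r) (hs : 0 ≤ s) {z : ℂ} (hz : 0 < ‖z‖) :
    ipsIntegrand μ p s r z ≤ k ^ p / (1 - k ^ 2) ^ p * r ^ s * ‖z‖ ^ (-(2 + s)) := by
  have := one_sub_norm_sq_pos hk hμk z
  calc ipsIntegrand μ p s r z ≤ ‖μ z‖ ^ p / (1 - ‖μ z‖ ^ 2) ^ p * r ^ s * ‖z‖ ^ (-(2 + s)) :=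
        div_sq_mul_one_add_div_rpow_le_rpow (by positivity) hz hr hs
    _ ≤ _ := by
        gcongr ?_ * _ * _
        exact rpow_div_one_sub_sq_rpow_le hk hp (norm_nonneg _) (hμk z)

lemma dilatationIntegrand_le_of_one_le_norm (hk : k < 1) (hμk : ∀ z, ‖μ z‖ ≤ k) {z : ℂ}
    (hz : 1 ≤ ‖z‖) : dilatationIntegrand μ z ≤ k ^ 2 / (1 - k ^ 2) := by
  have h := one_sub_norm_sq_pos hk hμk z
  have hk2 : 1 - k ^ 2 ≤ 1 - ‖μ z‖ ^ 2 := by nlinarith [norm_nonneg (μ z), hμk z]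
  unfold dilatationIntegrand
  apply div_le_div₀ (sq_nonneg k) (pow_le_pow_left₀ (norm_nonneg _) (hμk z) 2)
    (by nlinarith [norm_nonneg (μ z), hμk z])
  calc 1 - k ^ 2 ≤ 1 - ‖μ z‖ ^ 2 := hk2
    _ ≤ (1 - ‖μ z‖ ^ 2) * ‖z‖ ^ 2 := le_mul_of_one_le_right h.le (one_le_pow₀ hz)

end Integrands

section Integrals

variable {μ : ℂ → ℂ} {k p s r : ℝ}

lemma integrableOn_dilatationIntegrand_setOf_norm_lt (hk : k < 1) (hμ : Measurable μ)
    (hμk : ∀ z, ‖μ z‖ ≤ k) (hint : IntegrableOn (dilatationIntegrand μ) {z | ‖z‖ < 1})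
    (R : ℝ) : IntegrableOn (dilatationIntegrand μ) {z | ‖z‖ < R} := by
  have hfar : IntegrableOn (dilatationIntegrand μ) ({z : ℂ | ‖z‖ < R} \ {z | ‖z‖ < 1}) := by
    refine Measure.integrableOn_of_bounded (M := k ^ 2 / (1 - k ^ 2)) ?_
      (measurable_dilatationIntegrand hμ).aestronglyMeasurable ?_
    · exact ((measure_mono (t := Metric.ball (0 : ℂ) R) fun z hz => mem_ball_zero_iff.2 hz.1)
        |>.trans_lt measure_ball_lt_top).ne
    · refine ae_restrict_of_forall_mem
        ((measurableSet_setOf_norm_lt R).diff (measurableSet_setOf_norm_lt 1)) fun z hz => ?_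
      rw [Real.norm_of_nonneg (dilatationIntegrand_nonneg hk hμk z)]
      exact dilatationIntegrand_le_of_one_le_norm hk hμk (not_lt.1 hz.2)
  exact (hint.union hfar).mono_set (by rw [union_sdiff_self]; exact subset_union_right)

lemma integrable_ipsIntegrand (hk : k < 1) (hp : 2 ≤ p) (hμ : Measurable μ)
    (hμk : ∀ z, ‖μ z‖ ≤ k) (hint : IntegrableOn (dilatationIntegrand μ) {z | ‖z‖ < 1})
    (hr : 0 < r) (hs : 0 < s) : Integrable (ipsIntegrand μ p s r) := by
  have hmeas : AEStronglyMeasurable (ipsIntegrand μ p s r) :=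
    (measurable_ipsIntegrand hμ).aestronglyMeasurable
  have hnorm : ∀ z, ‖ipsIntegrand μ p s r z‖ = ipsIntegrand μ p s r z := fun z =>
    Real.norm_of_nonneg (ipsIntegrand_nonneg hk hμk hr.le z)
  have hnear : IntegrableOn (ipsIntegrand μ p s r) {z | ‖z‖ < 1} :=
    (hint.const_mul _).mono' hmeas.restrict <| ae_of_all _ fun z => (hnorm z).trans_le
      (ipsIntegrand_le_mul_dilatationIntegrand hk hp hμk hr hs.le z)
  have hfar : IntegrableOn (ipsIntegrand μ p s r) {z | ‖z‖ < 1}ᶜ := by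
    rw [compl_setOf_norm_lt]
    refine ((integrableOn_norm_rpow_setOf_le_norm_complex (by linarith) one_pos).const_mul _).mono'
      hmeas.restrict <| ae_restrict_of_forall_mem (measurableSet_setOf_le_norm 1)
        fun z (hz : 1 ≤ ‖z‖) => (hnorm z).trans_le
          (ipsIntegrand_le_mul_norm_rpow hk (by linarith) hμk hr hs.le (by linarith))
  simpa using hnear.union hfar

lemma setIntegral_ipsIntegrand_setOf_norm_lt_le (hk : k < 1) (hp : 2 ≤ p) (hμ : Measurable μ)
    (hμk : ∀ z, ‖μ z‖ ≤ k) (hint : IntegrableOn (dilatationIntegrand μ) {z | ‖z‖ < 1})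
    (hr : 0 < r) (hs : 0 ≤ s) (R : ℝ) :
    ∫ z in {z | ‖z‖ < R}, ipsIntegrand μ p s r z ≤
      k ^ (p - 2) / (1 - k ^ 2) ^ (p - 1) * ∫ z in {z | ‖z‖ < R}, dilatationIntegrand μ z := by
  rw [← integral_const_mul]
  exact setIntegral_mono_of_nonneg (fun z _ => ipsIntegrand_nonneg hk hμk hr.le z)
    (fun z _ => ipsIntegrand_le_mul_dilatationIntegrand hk hp hμk hr hs z)
    ((integrableOn_dilatationIntegrand_setOf_norm_lt hk hμ hμk hint R).const_mul _)

lemma setIntegral_ipsIntegrand_setOf_le_norm_le (hk : k < 1) (hp : 0 ≤ p)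
    (hμk : ∀ z, ‖μ z‖ ≤ k) (hr : 0 < r) (hs : 0 < s) {R : ℝ} (hR : 0 < R) :
    ∫ z in {z | R ≤ ‖z‖}, ipsIntegrand μ p s r z ≤
      2 * Real.pi * (k ^ p / (1 - k ^ 2) ^ p) / s * (r / R) ^ s := by
  have hb : -(2 + s) < -2 := by linarith
  calc ∫ z in {z | R ≤ ‖z‖}, ipsIntegrand μ p s r z
      ≤ ∫ z in {z | R ≤ ‖z‖}, k ^ p / (1 - k ^ 2) ^ p * r ^ s * ‖z‖ ^ (-(2 + s)) :=
        setIntegral_mono_of_nonneg (fun z _ => ipsIntegrand_nonneg hk hμk hr.le z)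
          (fun z (hz : R ≤ ‖z‖) =>
            ipsIntegrand_le_mul_norm_rpow hk hp hμk hr hs.le (hR.trans_le hz))
          ((integrableOn_norm_rpow_setOf_le_norm_complex hb hR).const_mul _)
    _ = k ^ p / (1 - k ^ 2) ^ p * r ^ s * (2 * Real.pi * (-R ^ (-s) / -s)) := by
        rw [integral_const_mul, setIntegral_norm_rpow_setOf_le_norm_complex hb hR,
          show -(2 + s) + 2 = -s by ring]
    _ = 2 * Real.pi * (k ^ p / (1 - k ^ 2) ^ p) / s * (r / R) ^ s := by
        rw [Real.div_rpow hr.le hR.le, Real.rpow_neg hR.le]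
        field_simp

end Integrals

/-- **Estimate on `I_{p,s}`.** If `|μ| ≤ k < 1` and `∬_{|z|<1} |μ|²/((1-|μ|²)|z|²) < ∞`,
then for `p > 2`, `0 < s < p`, the integrand of `I_{p,s}(μ; r)` is integrable for every
`r > 0` and there exist constants `C₂, C₃ > 0` depending only on `K = (1+k)/(1-k)` and `p`
such that for all `0 < r < r'`,
`I_{p,s}(μ; r) ≤ C₂ ∬_{|z|<r'} |μ|²/((1-|μ|²)|z|²) dxdy + (C₃/s)(r/r')^s`. -/
theorem estimate_on_Ips (k p : ℝ) (hk0 : 0 ≤ k) (hk1 : k < 1) (hp : 2 < p) :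
    ∃ C₂ > 0, ∃ C₃ > 0, ∀ μ : ℂ → ℂ, Measurable μ → (∀ z, ‖μ z‖ ≤ k) →
      IntegrableOn
        (fun z : ℂ => ‖μ z‖ ^ 2 / ((1 - ‖μ z‖ ^ 2) * ‖z‖ ^ 2))
        {z : ℂ | ‖z‖ < 1} volume →
      ∀ s : ℝ, 0 < s → s < p →
        (∀ r : ℝ, 0 < r → Integrable
          (fun z : ℂ => ‖μ z‖ ^ p / (1 - ‖μ z‖ ^ 2) ^ p /
            (‖z‖ ^ 2 * (1 + ‖z‖ / r) ^ s)) volume) ∧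
        ∀ r r' : ℝ, 0 < r → r < r' →
          Ips μ p s r ≤
            C₂ * (∫ z in {z : ℂ | ‖z‖ < r'},
                ‖μ z‖ ^ 2 / ((1 - ‖μ z‖ ^ 2) * ‖z‖ ^ 2)) +
              (C₃ / s) * (r / r') ^ s := by
  have hk2 : 0 < 1 - k ^ 2 := by nlinarith
  set a := k ^ (p - 2) / (1 - k ^ 2) ^ (p - 1)
  set M := k ^ p / (1 - k ^ 2) ^ p
  -- `a` and `M` vanish when `k = 0`, whereas the constants must be positive.
  refine ⟨a + 1, by positivity, 2 * Real.pi * (M + 1), by positivity,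
    fun μ hμ hμk hint s hs _ => ⟨fun r hr => integrable_ipsIntegrand hk1 hp.le hμ hμk hint hr hs,
      fun r R hr hrR => ?_⟩⟩
  have hR : 0 < R := hr.trans hrR
  have hJ : 0 ≤ ∫ z in {z | ‖z‖ < R}, dilatationIntegrand μ z :=
    setIntegral_nonneg (measurableSet_setOf_norm_lt R) fun z _ =>
      dilatationIntegrand_nonneg hk1 hμk z
  calc Ips μ p s r
      = (∫ z in {z | ‖z‖ < R}, ipsIntegrand μ p s r z) +
          ∫ z in {z | R ≤ ‖z‖}, ipsIntegrand μ p s r z := by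
        rw [← compl_setOf_norm_lt, integral_add_compl (measurableSet_setOf_norm_lt R)
          (integrable_ipsIntegrand hk1 hp.le hμ hμk hint hr hs)]
        rfl
    _ ≤ a * (∫ z in {z | ‖z‖ < R}, dilatationIntegrand μ z) + 2 * Real.pi * M / s * (r / R) ^ s :=
        add_le_add (setIntegral_ipsIntegrand_setOf_norm_lt_le hk1 hp.le hμ hμk hint hr hs.le R)
          (setIntegral_ipsIntegrand_setOf_le_norm_le hk1 (by linarith) hμk hr hs hR)
    _ ≤ (a + 1) * (∫ z in {z | ‖z‖ < R}, dilatationIntegrand μ z) +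
          2 * Real.pi * (M + 1) / s * (r / R) ^ s := by
        gcongr <;> linarith
end
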